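/- Uniqueness of the radial vacuum metric: fix R₀ ≥ 0 and let f, h : (R₀,∞) → (0,∞) be smooth functions such that the metric g(t,r,φ,ψ) = diag(f(r), −h(r), −r², −r²·sin²φ) on the chart {(t,r,φ,ψ) : r > R₀, 0 < φ < π} has identically vanishing Ricci tensor, and such that f(r) → 1 as r → ∞. Then there exists a constant R₁ ∈ ℝ such that f(r) = 1 − R₁/r and h(r) = (1 − R₁/r)⁻¹ for all r > R₀; i.e. the metric is a Schwarzschild metric. -/

import Mathlib

noncomputable section

/-- Partial derivative of `f` in the `i`-th coordinate direction at `p`. -/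
def coordPDeriv {n : ℕ} (f : (Fin n → ℝ) → ℝ) (i : Fin n) (p : Fin n → ℝ) : ℝ :=
  fderiv ℝ f p (Pi.single i 1)

/-- Christoffel symbols `Γ^k_{ij}` of a metric `g` given in coordinates on (an open
subset of) `ℝⁿ`: `Γ^k_{ij} = (1/2) Σ_l g^{kl} (∂_i g_{jl} + ∂_j g_{il} − ∂_l g_{ij})`. -/
def christoffel {n : ℕ} (g : (Fin n → ℝ) → Matrix (Fin n) (Fin n) ℝ)
    (k i j : Fin n) (p : Fin n → ℝ) : ℝ :=
  (1 / 2) * ∑ l, (g p)⁻¹ k l *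
    (coordPDeriv (fun q => g q j l) i p + coordPDeriv (fun q => g q i l) j p
      - coordPDeriv (fun q => g q i j) l p)

/-- The Ricci tensor in coordinates:
`Ric_{ij} = Σ_k ∂_k Γ^k_{ij} − Σ_k ∂_j Γ^k_{ik} + Σ_{k,l} (Γ^k_{kl} Γ^l_{ij} − Γ^k_{jl} Γ^l_{ik})`. -/
def ricci {n : ℕ} (g : (Fin n → ℝ) → Matrix (Fin n) (Fin n) ℝ)
    (i j : Fin n) (p : Fin n → ℝ) : ℝ :=
  (∑ k, coordPDeriv (fun q => christoffel g k i j q) k p)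
    - (∑ k, coordPDeriv (fun q => christoffel g k i k q) j p)
    + ∑ k, ∑ l, (christoffel g k k l p * christoffel g l i j p
        - christoffel g k j l p * christoffel g l i k p)

/-- The general radial metric `diag(f(r), −h(r), −r², −r²·sin²φ)` in coordinates
`(t, r, φ, ψ)`. -/
def radialMetric (f h : ℝ → ℝ) (p : Fin 4 → ℝ) : Matrix (Fin 4) (Fin 4) ℝ :=
  Matrix.diagonal
    ![f (p 1), -h (p 1), -(p 1) ^ 2, -(p 1) ^ 2 * Real.sin (p 2) ^ 2]

open Real Filter Set

lemma hasFDerivAt_proj {n : ℕ} (F : ℝ → ℝ) {d : ℝ} (m : Fin n) (p : Fin n → ℝ)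
    (hF : HasDerivAt F d (p m)) :
    HasFDerivAt (fun q : Fin n → ℝ => F (q m))
      ((ContinuousLinearMap.smulRight (1 : ℝ →L[ℝ] ℝ) d).comp
        (ContinuousLinearMap.proj m)) p :=
  hF.hasFDerivAt.comp p (hasFDerivAt_apply m p)

lemma coordPDeriv_proj {n : ℕ} (F : ℝ → ℝ) {d : ℝ} (m : Fin n) (p : Fin n → ℝ)
    (hF : HasDerivAt F d (p m)) (i : Fin n) :
    coordPDeriv (fun q => F (q m)) i p = if i = m then d else 0 := by
  rw [coordPDeriv, (hasFDerivAt_proj F m p hF).fderiv]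
  rcases eq_or_ne i m with rfl | hne <;> simp [Pi.single_apply, *]

lemma coordPDeriv_const {n : ℕ} (c : ℝ) (i : Fin n) (p : Fin n → ℝ) :
    coordPDeriv (fun _ => c) i p = 0 := by
  simp [coordPDeriv]

lemma coordPDeriv_mul {n : ℕ} (F G : ℝ → ℝ) {d e : ℝ} (m m' : Fin n) (p : Fin n → ℝ)
    (hF : HasDerivAt F d (p m)) (hG : HasDerivAt G e (p m')) (i : Fin n) :
    coordPDeriv (fun q => F (q m) * G (q m')) i p =
      (if i = m then d * G (p m') else 0) + (if i = m' then F (p m) * e else 0) := by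
  rw [coordPDeriv, ((hasFDerivAt_proj F m p hF).fun_mul (hasFDerivAt_proj G m' p hG)).fderiv]
  rcases eq_or_ne i m with rfl | h1 <;> rcases eq_or_ne i m' with rfl | h2 <;>
    simp [Pi.single_apply, *] <;> ring


lemma diag_inv {n : ℕ} (v : Fin n → ℝ) (hv : ∀ i, v i ≠ 0) :
    (Matrix.diagonal v)⁻¹ = Matrix.diagonal (fun i => (v i)⁻¹) := by
  apply Matrix.inv_eq_right_inv
  rw [Matrix.diagonal_mul_diagonal]
  have e : (fun i => v i * (v i)⁻¹) = fun _ => 1 := funext fun i => mul_inv_cancel₀ (hv i)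
  rw [e]
  exact Matrix.diagonal_one

def Gam (f h : ℝ → ℝ) (p : Fin 4 → ℝ) : Fin 4 → Fin 4 → Fin 4 → ℝ :=
  let r := p 1; let φ := p 2
  let a := deriv f r / (2 * f r)
  ![ ![ ![0, a, 0, 0], ![a, 0, 0, 0], ![0,0,0,0], ![0,0,0,0] ],
     ![ ![deriv f r / (2 * h r), 0,0,0], ![0, deriv h r / (2 * h r), 0,0],
        ![0,0, -(r / h r), 0], ![0,0,0, -(r * Real.sin φ ^ 2 / h r)] ],
     ![ ![0,0,0,0], ![0,0, r⁻¹, 0], ![0, r⁻¹, 0,0], ![0,0,0, -(Real.sin φ * Real.cos φ)] ],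
     ![ ![0,0,0,0], ![0,0,0, r⁻¹], ![0,0,0, Real.cos φ / Real.sin φ],
        ![0, r⁻¹, Real.cos φ / Real.sin φ, 0] ] ]

set_option maxHeartbeats 2000000 in
lemma christoffel_eq (f h : ℝ → ℝ) (p : Fin 4 → ℝ) (hf : DifferentiableAt ℝ f (p 1))
    (hh : DifferentiableAt ℝ h (p 1)) (hfp : f (p 1) ≠ 0) (hhp : h (p 1) ≠ 0)
    (hr : p 1 ≠ 0) (hs : Real.sin (p 2) ≠ 0) (k i j : Fin 4) :
    christoffel (radialMetric f h) k i j p = Gam f h p k i j := by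
  have hfd : HasDerivAt f (deriv f (p 1)) (p 1) := hf.hasDerivAt
  have hhd : HasDerivAt h (deriv h (p 1)) (p 1) := hh.hasDerivAt
  have pdf : ∀ i, coordPDeriv (fun q => f (q 1)) i p = if i = 1 then deriv f (p 1) else 0 :=
    fun i => coordPDeriv_proj f 1 p hfd i
  have pdnh : ∀ i, coordPDeriv (fun q => -h (q 1)) i p = if i = 1 then -deriv h (p 1) else 0 :=
    fun i => coordPDeriv_proj (fun x => -h x) 1 p hhd.neg i
  have pdr2 : ∀ i, coordPDeriv (fun q => -(q 1)^2) i p = if i = 1 then -(2 * p 1) else 0 := by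
    intro i
    have : HasDerivAt (fun x : ℝ => -(x^2)) (-(2 * p 1)) (p 1) := by
      simpa using ((hasDerivAt_pow 2 (p 1)).fun_neg)
    exact coordPDeriv_proj (fun x => -(x^2)) 1 p this i
  have hsin : HasDerivAt (fun y => Real.sin y ^ 2) (2 * Real.sin (p 2) * Real.cos (p 2)) (p 2) := by
    simpa [pow_one, mul_comm] using ((Real.hasDerivAt_sin (p 2)).fun_pow 2)
  have pdr2s : ∀ i, coordPDeriv (fun q => -(q 1 ^ 2 * Real.sin (q 2) ^ 2)) i p =
      (if i = 1 then -(2 * p 1) * Real.sin (p 2)^2 else 0)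
      + (if i = 2 then -(p 1)^2 * (2 * Real.sin (p 2) * Real.cos (p 2)) else 0) := by
    intro i
    have h1 : HasDerivAt (fun x : ℝ => -(x^2)) (-(2 * p 1)) (p 1) := by
      simpa using ((hasDerivAt_pow 2 (p 1)).fun_neg)
    have e : (fun q : Fin 4 → ℝ => -(q 1 ^ 2 * Real.sin (q 2) ^ 2))
        = fun q => (-(q 1 ^ 2)) * Real.sin (q 2) ^ 2 := by funext q; ring
    rw [e]; exact coordPDeriv_mul (fun x => -(x^2)) (fun y => Real.sin y ^2) 1 2 p h1 hsin i
  have pd0 : ∀ (i : Fin 4), coordPDeriv (fun _ => (0:ℝ)) i p = 0 := fun i => coordPDeriv_const 0 i p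
  have hinv : (radialMetric f h p)⁻¹ = Matrix.diagonal
      (fun i => ((![f (p 1), -h (p 1), -(p 1) ^ 2, -(p 1) ^ 2 * Real.sin (p 2) ^ 2]) i)⁻¹) := by
    apply diag_inv
    intro i; fin_cases i <;> simp [hfp, hhp, hr, hs, pow_eq_zero_iff]
  fin_cases k <;> fin_cases i <;> fin_cases j <;>
    simp only [christoffel, Fin.sum_univ_four, hinv] <;>
    (try simp [radialMetric, Matrix.diagonal_apply, Matrix.vecHead, Matrix.vecTail,
      pdf, pdnh, pdr2, pdr2s, pd0, Gam, mul_inv_cancel_right₀, hfp, hhp, hr, hs]) <;>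
    (try field_simp) <;> (try simp [mul_inv_cancel_right₀, hfp, hhp, hr, hs]) <;> (try ring)
-- gets appended after t2.lean content (christoffel_eq etc.)

lemma sin_pos_of_mem (x : ℝ) (h1 : 0 < x) (h2 : x < Real.pi) : Real.sin x ≠ 0 :=
  ne_of_gt (Real.sin_pos_of_pos_of_lt_pi h1 h2)

set_option maxHeartbeats 4000000 in
lemma ricci_eval (R₀ : ℝ) (hR₀ : 0 ≤ R₀) (f h : ℝ → ℝ)
    (hf_smooth : ContDiffOn ℝ (⊤ : ℕ∞) f (Set.Ioi R₀))
    (hh_smooth : ContDiffOn ℝ (⊤ : ℕ∞) h (Set.Ioi R₀))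
    (hf_pos : ∀ r > R₀, 0 < f r) (hh_pos : ∀ r > R₀, 0 < h r)
    (r : ℝ) (hr : R₀ < r) :
    ricci (radialMetric f h) 0 0 ![0, r, Real.pi/2, 0]
        = (2*(deriv (deriv f) r)*(f r)*(h r)*r - (f r)*(deriv f r)*(deriv h r)*r
            - (h r)*(deriv f r)^2*r + 4*(f r)*(deriv f r)*(h r)) / (4*(f r)*(h r)^2*r)
      ∧ ricci (radialMetric f h) 1 1 ![0, r, Real.pi/2, 0]
        = (-(2*(deriv (deriv f) r)*(f r)*(h r)*r) + (h r)*(deriv f r)^2*r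
            + (f r)*(deriv f r)*(deriv h r)*r + 4*(f r)^2*(deriv h r)) / (4*(f r)^2*(h r)*r)
      ∧ ricci (radialMetric f h) 2 2 ![0, r, Real.pi/2, 0]
        = (2*(f r)*(h r)^2 - 2*(f r)*(h r) + r*(f r)*(deriv h r) - r*(h r)*(deriv f r))
            / (2*(f r)*(h r)^2) := by
  have hr0 : 0 < r := lt_of_le_of_lt hR₀ hr
  set p : Fin 4 → ℝ := ![0, r, Real.pi/2, 0] with hp
  have hp1 : p 1 = r := by simp [hp]
  have hp2 : p 2 = Real.pi/2 := by simp [hp]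
  -- the open region
  set U : Set (Fin 4 → ℝ) := {q | R₀ < q 1 ∧ 0 < q 2 ∧ q 2 < Real.pi} with hUdef
  have hUopen : IsOpen U := by
    have h1 : U = (fun q : Fin 4 → ℝ => q 1) ⁻¹' (Set.Ioi R₀)
        ∩ ((fun q : Fin 4 → ℝ => q 2) ⁻¹' (Set.Ioi 0)
        ∩ (fun q : Fin 4 → ℝ => q 2) ⁻¹' (Set.Iio Real.pi)) := by
      ext q; simp [hUdef, Set.mem_setOf_eq, and_assoc]
    rw [h1]
    exact ((isOpen_Ioi).preimage (continuous_apply 1)).inter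
      (((isOpen_Ioi).preimage (continuous_apply 2)).inter
        ((isOpen_Iio).preimage (continuous_apply 2)))
  have hpU : p ∈ U := by
    refine ⟨by rw [hp1]; exact hr, by rw [hp2]; positivity, ?_⟩
    rw [hp2]; linarith [Real.pi_pos]
  have hGamU : ∀ q ∈ U, ∀ k i j : Fin 4,
      christoffel (radialMetric f h) k i j q = Gam f h q k i j := by
    intro q hq k i j
    obtain ⟨hq1, hq2, hq3⟩ := hq
    exact christoffel_eq f h q
      ((hf_smooth.contDiffAt ((isOpen_Ioi).mem_nhds hq1)).differentiableAt (by simp))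
      ((hh_smooth.contDiffAt ((isOpen_Ioi).mem_nhds hq1)).differentiableAt (by simp))
      (ne_of_gt (hf_pos _ hq1)) (ne_of_gt (hh_pos _ hq1))
      (ne_of_gt (lt_of_le_of_lt hR₀ hq1)) (sin_pos_of_mem _ hq2 hq3) k i j
  have pdC : ∀ k i j m : Fin 4,
      coordPDeriv (fun q => christoffel (radialMetric f h) k i j q) m p
        = coordPDeriv (fun q => Gam f h q k i j) m p := by
    intro k i j m
    have hev : (fun q => christoffel (radialMetric f h) k i j q)
        =ᶠ[nhds p] (fun q => Gam f h q k i j) :=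
      Filter.eventuallyEq_of_mem (hUopen.mem_nhds hpU) (fun q hq => hGamU q hq k i j)
    simp only [coordPDeriv, hev.fderiv_eq]
  have hGamP := fun k i j => hGamU p hpU k i j
  -- differentiability
  have hmem : r ∈ Set.Ioi R₀ := hr
  have hnb := (isOpen_Ioi (a := R₀)).mem_nhds hmem
  have hdf : HasDerivAt f (deriv f r) r :=
    ((hf_smooth.contDiffAt hnb).differentiableAt (by simp)).hasDerivAt
  have hdh : HasDerivAt h (deriv h r) r :=
    ((hh_smooth.contDiffAt hnb).differentiableAt (by simp)).hasDerivAt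
  have hf'sm : ContDiffOn ℝ (⊤ : ℕ∞) (deriv f) (Set.Ioi R₀) :=
    hf_smooth.deriv_of_isOpen isOpen_Ioi (by simp)
  have hh'sm : ContDiffOn ℝ (⊤ : ℕ∞) (deriv h) (Set.Ioi R₀) :=
    hh_smooth.deriv_of_isOpen isOpen_Ioi (by simp)
  have hdf2 : HasDerivAt (deriv f) (deriv (deriv f) r) r :=
    ((hf'sm.contDiffAt hnb).differentiableAt (by simp)).hasDerivAt
  have hdh2 : HasDerivAt (deriv h) (deriv (deriv h) r) r :=
    ((hh'sm.contDiffAt hnb).differentiableAt (by simp)).hasDerivAt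
  have hfne : f r ≠ 0 := ne_of_gt (hf_pos _ hr)
  have hhne : h r ≠ 0 := ne_of_gt (hh_pos _ hr)
  have hrne : r ≠ 0 := ne_of_gt hr0
  -- derivative facts for the Christoffel entry functions
  have hA : HasDerivAt (fun x => deriv f x / (2 * f x))
      ((deriv (deriv f) r * (2 * f r) - deriv f r * (2 * deriv f r)) / (2 * f r)^2) r :=
    hdf2.div (hdf.const_mul 2) (by simpa using hfne)
  have hB : HasDerivAt (fun x => deriv f x / (2 * h x))
      ((deriv (deriv f) r * (2 * h r) - deriv f r * (2 * deriv h r)) / (2 * h r)^2) r :=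
    hdf2.div (hdh.const_mul 2) (by simpa using hhne)
  have hCc : HasDerivAt (fun x => deriv h x / (2 * h x))
      ((deriv (deriv h) r * (2 * h r) - deriv h r * (2 * deriv h r)) / (2 * h r)^2) r :=
    hdh2.div (hdh.const_mul 2) (by simpa using hhne)
  have hD : HasDerivAt (fun x => -(x / h x))
      (-((1 * h r - r * deriv h r) / (h r)^2)) r :=
    ((hasDerivAt_id r).div hdh hhne).neg
  have hE : HasDerivAt (fun x : ℝ => x⁻¹) (-(r^2)⁻¹) r := hasDerivAt_inv hrne
  have hK : HasDerivAt (fun y => Real.cos y / Real.sin y) (-1) (Real.pi/2) := by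
    have h0 : Real.sin (Real.pi/2) ≠ 0 := by norm_num [Real.sin_pi_div_two]
    have := (Real.hasDerivAt_cos (Real.pi/2)).div (Real.hasDerivAt_sin (Real.pi/2)) h0
    norm_num [Real.sin_pi_div_two, Real.cos_pi_div_two] at this
    exact this
  -- coordinate partial derivatives of the entry functions
  have pdA : ∀ m, coordPDeriv (fun q => deriv f (q 1) / (2 * f (q 1))) m p
      = if m = 1 then (deriv (deriv f) r * (2 * f r) - deriv f r * (2 * deriv f r)) / (2 * f r)^2
        else 0 :=
    fun m => coordPDeriv_proj (fun x => deriv f x / (2 * f x)) 1 p (by rw [hp1]; exact hA) m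
  have pdB : ∀ m, coordPDeriv (fun q => deriv f (q 1) / (2 * h (q 1))) m p
      = if m = 1 then (deriv (deriv f) r * (2 * h r) - deriv f r * (2 * deriv h r)) / (2 * h r)^2
        else 0 :=
    fun m => coordPDeriv_proj (fun x => deriv f x / (2 * h x)) 1 p (by rw [hp1]; exact hB) m
  have pdCh : ∀ m, coordPDeriv (fun q => deriv h (q 1) / (2 * h (q 1))) m p
      = if m = 1 then (deriv (deriv h) r * (2 * h r) - deriv h r * (2 * deriv h r)) / (2 * h r)^2
        else 0 :=
    fun m => coordPDeriv_proj (fun x => deriv h x / (2 * h x)) 1 p (by rw [hp1]; exact hCc) m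
  have pdD : ∀ m, coordPDeriv (fun q => -(q 1 / h (q 1))) m p
      = if m = 1 then -((1 * h r - r * deriv h r) / (h r)^2) else 0 :=
    fun m => coordPDeriv_proj (fun x => -(x / h x)) 1 p (by rw [hp1]; exact hD) m
  have pdE : ∀ m, coordPDeriv (fun q => (q 1)⁻¹) m p
      = if m = 1 then -(r^2)⁻¹ else 0 :=
    fun m => coordPDeriv_proj (fun x : ℝ => x⁻¹) 1 p (by rw [hp1]; exact hE) m
  have pdK : ∀ m, coordPDeriv (fun q => Real.cos (q 2) / Real.sin (q 2)) m p
      = if m = 2 then -1 else 0 :=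
    fun m => coordPDeriv_proj (fun y => Real.cos y / Real.sin y) 2 p (by rw [hp2]; exact hK) m
  have pd0 : ∀ (m : Fin 4), coordPDeriv (fun _ => (0:ℝ)) m p = 0 :=
    fun m => coordPDeriv_const 0 m p
  refine ⟨?_, ?_, ?_⟩
  · simp only [ricci, Fin.sum_univ_four, pdC, hGamP]
    simp [Gam, hp1, hp2, pdA, pdB, pdCh, pdD, pdE, pdK, pd0,
      Matrix.vecHead, Matrix.vecTail, Real.sin_pi_div_two, Real.cos_pi_div_two]
    field_simp
    ring
  · simp only [ricci, Fin.sum_univ_four, pdC, hGamP]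
    simp [Gam, hp1, hp2, pdA, pdB, pdCh, pdD, pdE, pdK, pd0,
      Matrix.vecHead, Matrix.vecTail, Real.sin_pi_div_two, Real.cos_pi_div_two]
    field_simp
    ring
  · simp only [ricci, Fin.sum_univ_four, pdC, hGamP]
    simp [Gam, hp1, hp2, pdA, pdB, pdCh, pdD, pdE, pdK, pd0,
      Matrix.vecHead, Matrix.vecTail, Real.sin_pi_div_two, Real.cos_pi_div_two]
    field_simp
    ring

lemma const_on_Ioi (a : ℝ) (F : ℝ → ℝ) (hF : ∀ x ∈ Set.Ioi a, HasDerivAt F 0 x)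
    {x y : ℝ} (hx : x ∈ Set.Ioi a) (hy : y ∈ Set.Ioi a) : F x = F y := by
  refine (convex_Ioi a).is_const_of_fderivWithin_eq_zero
    (fun z hz => (hF z hz).differentiableAt.differentiableWithinAt) (fun z hz => ?_) hx hy
  rw [fderivWithin_of_isOpen isOpen_Ioi hz, (hF z hz).hasFDerivAt.fderiv]
  ext w
  simp

/-- Uniqueness of the radial vacuum metric: a Ricci-flat radial metric
`diag(f(r), −h(r), −r², −r²·sin²φ)` with `f, h` smooth and positive on `(R₀, ∞)` and
`f(r) → 1` at infinity is a Schwarzschild metric: `f(r) = 1 − R₁/r` and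
`h(r) = (1 − R₁/r)⁻¹` for some constant `R₁`. -/
theorem radial_vacuum_metric_is_schwarzschild
    (R₀ : ℝ) (hR₀ : 0 ≤ R₀) (f h : ℝ → ℝ)
    (hf_smooth : ContDiffOn ℝ (⊤ : ℕ∞) f (Set.Ioi R₀))
    (hh_smooth : ContDiffOn ℝ (⊤ : ℕ∞) h (Set.Ioi R₀))
    (hf_pos : ∀ r > R₀, 0 < f r) (hh_pos : ∀ r > R₀, 0 < h r)
    (hric : ∀ p : Fin 4 → ℝ, R₀ < p 1 → 0 < p 2 → p 2 < Real.pi →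
      ∀ i j : Fin 4, ricci (radialMetric f h) i j p = 0)
    (hf_lim : Filter.Tendsto f Filter.atTop (nhds 1)) :
    ∃ R₁ : ℝ, ∀ r > R₀, f r = 1 - R₁ / r ∧ h r = (1 - R₁ / r)⁻¹ := by
  have hπ := Real.pi_pos
  -- differentiability at points of the region
  have hdiff : ∀ x ∈ Set.Ioi R₀, HasDerivAt f (deriv f x) x ∧ HasDerivAt h (deriv h x) x := by
    intro x hx
    have hnb := (isOpen_Ioi (a := R₀)).mem_nhds hx
    exact ⟨((hf_smooth.contDiffAt hnb).differentiableAt (by simp)).hasDerivAt,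
      ((hh_smooth.contDiffAt hnb).differentiableAt (by simp)).hasDerivAt⟩
  -- pointwise ODE relations coming from Ricci-flatness
  have key : ∀ r ∈ Set.Ioi R₀,
      deriv f r * h r + f r * deriv h r = 0 ∧
      2*(f r)*(h r)^2 - 2*(f r)*(h r) + r*(f r)*(deriv h r) - r*(h r)*(deriv f r) = 0 := by
    intro r hr
    have hr' : R₀ < r := hr
    have hr0 : 0 < r := lt_of_le_of_lt hR₀ hr'
    have hfp := hf_pos r hr'
    have hhp := hh_pos r hr'
    have hp1 : (![0, r, Real.pi/2, 0] : Fin 4 → ℝ) 1 = r := by simp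
    have hp2 : (![0, r, Real.pi/2, 0] : Fin 4 → ℝ) 2 = Real.pi/2 := by simp
    obtain ⟨c0, c1, c2⟩ := ricci_eval R₀ hR₀ f h hf_smooth hh_smooth hf_pos hh_pos r hr'
    have z0 := hric ![0, r, Real.pi/2, 0] (by rw [hp1]; exact hr') (by rw [hp2]; positivity)
      (by rw [hp2]; linarith) 0 0
    have z1 := hric ![0, r, Real.pi/2, 0] (by rw [hp1]; exact hr') (by rw [hp2]; positivity)
      (by rw [hp2]; linarith) 1 1
    have z2 := hric ![0, r, Real.pi/2, 0] (by rw [hp1]; exact hr') (by rw [hp2]; positivity)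
      (by rw [hp2]; linarith) 2 2
    rw [c0, div_eq_zero_iff] at z0
    rw [c1, div_eq_zero_iff] at z1
    rw [c2, div_eq_zero_iff] at z2
    have hN0 := z0.resolve_right (by positivity)
    have hN1 := z1.resolve_right (by positivity)
    have hN2 := z2.resolve_right (by positivity)
    constructor
    · have h4 : (4 * f r) * (deriv f r * h r + f r * deriv h r) = 0 := by
        linear_combination hN0 + hN1
      exact (mul_eq_zero.mp h4).resolve_left (by positivity)
    · exact hN2
  -- f * h is constant
  have hmem1 : R₀ + 1 ∈ Set.Ioi R₀ := by simp
  set C := f (R₀+1) * h (R₀+1) with hCdef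
  have hfh : ∀ x ∈ Set.Ioi R₀, f x * h x = C := by
    intro x hx
    refine const_on_Ioi R₀ (fun y => f y * h y) (fun z hz => ?_) hx hmem1
    obtain ⟨hdfz, hdhz⟩ := hdiff z hz
    have H := hdfz.mul hdhz
    rwa [(key z hz).1] at H
  -- the equation (r f)' = C
  have hb : ∀ x ∈ Set.Ioi R₀, f x + x * deriv f x = C := by
    intro x hx
    have hN2 := (key x hx).2
    have ha := (key x hx).1
    have hC := hfh x hx
    have h2 : 2 * h x * (C - f x - x * deriv f x) = 0 := by
      linear_combination hN2 - x * ha - 2 * (h x) * hC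
    have := (mul_eq_zero.mp h2).resolve_left (by
      have := hh_pos x hx; positivity)
    linarith
  -- x * f x - C * x is constant
  set K := (R₀+1) * f (R₀+1) - C * (R₀+1) with hKdef
  have hrf : ∀ x ∈ Set.Ioi R₀, x * f x - C * x = K := by
    intro x hx
    refine const_on_Ioi R₀ (fun y => y * f y - C * y) (fun z hz => ?_) hx hmem1
    obtain ⟨hdfz, _⟩ := hdiff z hz
    have H := ((hasDerivAt_id z).mul hdfz).sub ((hasDerivAt_id z).const_mul C)
    have hv : (1 * f z + id z * deriv f z) - C * 1 = 0 := by
      simp only [id_eq]; have := hb z hz; linarith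
    rwa [hv] at H
  -- take the limit to identify C = 1
  have hC1 : C = 1 := by
    have hdiv : Filter.Tendsto (fun x : ℝ => K / x) Filter.atTop (nhds 0) :=
      Filter.Tendsto.div_atTop tendsto_const_nhds Filter.tendsto_id
    have h1 : Filter.Tendsto (fun x : ℝ => C + K / x) Filter.atTop (nhds (C + 0)) :=
      tendsto_const_nhds.add hdiv
    have heq : (fun x : ℝ => C + K / x) =ᶠ[Filter.atTop] f := by
      filter_upwards [Filter.eventually_gt_atTop R₀,
        Filter.eventually_gt_atTop (max R₀ 0)] with x hx hx0
      have hxne : x ≠ 0 := ne_of_gt (lt_of_le_of_lt (le_max_right _ _) hx0)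
      have := hrf x hx
      field_simp
      linarith [this]
    have := tendsto_nhds_unique (h1.congr' heq) hf_lim
    linarith
  refine ⟨-K, fun r hr => ?_⟩
  have hr0 : 0 < r := lt_of_le_of_lt hR₀ hr
  have hrne : r ≠ 0 := ne_of_gt hr0
  have hfr : f r = 1 - (-K) / r := by
    have := hrf r hr
    rw [hC1] at this
    field_simp
    linarith
  refine ⟨hfr, ?_⟩
  have hCr := hfh r hr
  rw [hC1] at hCr
  rw [← hfr]
  have hfne : f r ≠ 0 := ne_of_gt (hf_pos r hr)
  field_simp
  linarith [hCr]


end
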